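/- Let D be a triangulated category with cluster tilting subcategory U such that D/U has finite global dimension. If V is a cluster tilting subcategory of D, then Ext¹_{D/U}(v̄, v̄′) = 0 for all v, v′ ∈ V; that is, the projected subcategory V̄ ⊆ D/U is rigid. -/

import Mathlib

/-!
Write `T = Σ⁻¹U` (`desuspension U`). Rigidity of `U` kills all maps from `T` to `U`, so `π` is
faithful on maps out of `T`, each `π t` (`t ∈ T`) is projective, and every object of `D/U` is a
quotient of some `π t` (the cone of a `T`-precover lies in `U`). Completing a map `t ⊕ u → y`
that is both a `T`- and a `U`-precover to a triangle `y' → t ⊕ u → y → Σy'` yields an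
epimorphism `π (t ⊕ u) → π y` from a projective whose kernel is the image of `π y'`; iterating
gives a projective resolution of `π v` built inside `D`. A `1`-cocycle `π w₁ → π v'` descends to
a map `π y' → π v'`, lifts to `y' → v'`, and extends along `y' → w₀` since the obstruction lies
in `Hom(v, Σv') = 0`.
-/

open CategoryTheory Limits Pretriangulated Opposite

noncomputable section

/-- The morphisms `x ⟶ y` in a category that factor through an object of `U`. -/
def FactorsThru {D : Type*} [Category D] (U : Set D) {x y : D} (f : x ⟶ y) : Prop :=
  ∃ (u : D) (_ : u ∈ U) (g : x ⟶ u) (h : u ⟶ y), g ≫ h = f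

/-- A full subcategory (given by its set of objects) is precovering. -/
def IsPrecovering {D : Type*} [Category D] (V : Set D) : Prop :=
  ∀ x : D, ∃ (v : D) (_ : v ∈ V) (p : v ⟶ x),
    ∀ v' ∈ V, ∀ f : v' ⟶ x, ∃ g : v' ⟶ v, g ≫ p = f

/-- A full subcategory (given by its set of objects) is preenveloping. -/
def IsPreenveloping {D : Type*} [Category D] (V : Set D) : Prop :=
  ∀ x : D, ∃ (v : D) (_ : v ∈ V) (i : x ⟶ v),
    ∀ v' ∈ V, ∀ f : x ⟶ v', ∃ g : v ⟶ v', i ≫ g = f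

/-- A full subcategory `V` of a triangulated category is maximal 1-orthogonal if
`v ∈ V ⇔ Hom(V, Σv) = 0 ⇔ Hom(v, ΣV) = 0`. -/
def MaxOneOrthogonal {D : Type*} [Category D] [Preadditive D] [HasShift D ℤ] (V : Set D) : Prop :=
  (∀ x : D, x ∈ V ↔ ∀ v ∈ V, ∀ f : v ⟶ x⟦(1:ℤ)⟧, f = 0) ∧
  (∀ x : D, x ∈ V ↔ ∀ v ∈ V, ∀ f : x ⟶ v⟦(1:ℤ)⟧, f = 0)

/-- A cluster tilting subcategory is a maximal 1-orthogonal subcategory which is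
precovering and preenveloping. -/
def ClusterTilting {D : Type*} [Category D] [Preadditive D] [HasShift D ℤ] (U : Set D) : Prop :=
  MaxOneOrthogonal U ∧ IsPrecovering U ∧ IsPreenveloping U

/-- An abelian category has finite global dimension if `Ext^m` vanishes uniformly for all
sufficiently large `m`. -/
def FinGlobalDim (k : Type*) [Field k] (A : Type*) [Category A] [Abelian A] [Linear k A]
    [EnoughProjectives A] : Prop :=
  ∃ n : ℕ, ∀ m : ℕ, n ≤ m → ∀ x y : A, Subsingleton (((Ext k A m).obj (op x)).obj y)

lemma IsPrecovering.comap_equivalence {C C' : Type*} [Category C] [Category C'] (e : C ≌ C')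
    {U : Set C'} (hiso : ∀ ⦃x y : C'⦄, (x ≅ y) → y ∈ U → x ∈ U) (hU : IsPrecovering U) :
    IsPrecovering {x | e.functor.obj x ∈ U} := by
  intro x
  obtain ⟨u, hu, q, hq⟩ := hU (e.functor.obj x)
  refine ⟨e.inverse.obj u, hiso (e.counitIso.app u) hu,
    e.functor.preimage (e.counit.app u ≫ q), fun v hv f => ?_⟩
  obtain ⟨g, hg⟩ := hq _ hv (e.functor.map f)
  refine ⟨e.functor.preimage (g ≫ e.counitInv.app u), e.functor.map_injective ?_⟩
  simp [hg]

namespace CategoryTheory.Functor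

variable {C A : Type*} [Category C] [Category A] [Preadditive A] (F : C ⥤ A) [F.Full] [F.EssSurj]

lemma epi_map_of_cancel_zero {x y : C} (f : x ⟶ y)
    (h : ∀ ⦃z : C⦄ (g : y ⟶ z), F.map (f ≫ g) = 0 → F.map g = 0) : Epi (F.map f) := by
  rw [Preadditive.epi_iff_cancel_zero]
  intro Z φ hφ
  have hg := h (F.preimage (φ ≫ (F.objObjPreimageIso Z).inv)) (by simp [reassoc_of% hφ])
  simpa using hg =≫ (F.objObjPreimageIso Z).hom

omit [Preadditive A] in
lemma projective_obj_of_exists_lift {t : C}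
    (h : ∀ ⦃a b : C⦄ (e : a ⟶ b), Epi (F.map e) → ∀ g : t ⟶ b, ∃ l : t ⟶ a, l ≫ e = g) :
    Projective (F.obj t) where
  factors {E X} f e he := by
    let iE := F.objObjPreimageIso E
    let iX := F.objObjPreimageIso X
    have hepi : Epi (F.map (F.preimage (iE.hom ≫ e ≫ iX.inv))) := by
      rw [F.map_preimage]; infer_instance
    obtain ⟨l, hl⟩ := h _ hepi (F.preimage (f ≫ iX.inv))
    refine ⟨F.map l ≫ iE.hom, ?_⟩
    simpa using congr_arg (fun m => F.map m ≫ iX.hom) hl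

end CategoryTheory.Functor

namespace CategoryTheory.Pretriangulated.Triangle

variable {C : Type*} [Category C] [Preadditive C] [HasZeroObject C] [HasShift C ℤ]
  [∀ n : ℤ, (CategoryTheory.shiftFunctor C n).Additive] [Pretriangulated C]

lemma yoneda_exact₁ (T : Triangle C) (hT : T ∈ distTriang C) {X : C} (f : T.obj₁ ⟶ X)
    (hf : T.mor₃ ≫ f⟦(1 : ℤ)⟧' = 0) : ∃ g : T.obj₂ ⟶ X, f = T.mor₁ ≫ g := by
  obtain ⟨g, hg⟩ : ∃ g : T.obj₂⟦(1 : ℤ)⟧ ⟶ X⟦(1 : ℤ)⟧, f⟦(1 : ℤ)⟧' = T.rotate.mor₃ ≫ g :=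
    yoneda_exact₃ _ (rot_of_distTriang _ hT) _ hf
  refine ⟨-(CategoryTheory.shiftFunctor C (1 : ℤ)).preimage g,
    (CategoryTheory.shiftFunctor C (1 : ℤ)).map_injective ?_⟩
  rw [hg, Functor.map_comp, Functor.map_neg, Functor.map_preimage, Preadditive.comp_neg]
  exact Preadditive.neg_comp _ _

end CategoryTheory.Pretriangulated.Triangle

namespace CategoryTheory.ProjectiveResolution

variable {C : Type*} [Category C] [Abelian C]

section

variable {X : C} (P : ℕ → C) (hP : ∀ n, Projective (P n)) (d : ∀ n, P (n + 1) ⟶ P n)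
  (sq : ∀ n, d (n + 1) ≫ d n = 0) (ε : P 0 ⟶ X) (hε : d 0 ≫ ε = 0) (hεepi : Epi ε)
  (exact₀ : (ShortComplex.mk (d 0) ε hε).Exact)
  (exact : ∀ n, (ShortComplex.mk (d (n + 1)) (d n) (sq n)).Exact)

def ofExact : ProjectiveResolution X :=
  have hd (n : ℕ) : ChainComplex.of.d P d (n + 1) n = d n := ChainComplex.of_d P d n
  { complex := ChainComplex.of P d sq
    projective := hP
    π := (ChainComplex.toSingle₀Equiv _ _).symm ⟨ε, by convert hε using 2; exact hd 0⟩
    quasiIso := ⟨fun n => by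
      cases n with
      | zero =>
        rw [ChainComplex.quasiIsoAt₀_iff, ShortComplex.quasiIso_iff_of_zeros']
        · refine (ShortComplex.exact_and_epi_g_iff_of_iso ?_).2 ⟨exact₀, hεepi⟩
          refine ShortComplex.isoMk (Iso.refl _) (Iso.refl _) (Iso.refl _) ?_ ?_
          · erw [Category.id_comp, Category.comp_id]; exact (hd 0).symm
          · erw [Category.id_comp, Category.comp_id]
            exact (ChainComplex.toSingle₀Equiv_symm_apply_f_zero
              (C := ChainComplex.of P d sq) ε _).symm
        all_goals rfl
      | succ n =>
        rw [quasiIsoAt_iff_exactAt' _ _ (ChainComplex.exactAt_succ_single_obj _ _),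
          HomologicalComplex.exactAt_iff' _ (n + 2) (n + 1) n (by simp) (by simp)]
        refine (ShortComplex.exact_iff_of_iso (S₁ := ShortComplex.mk (d (n + 1)) (d n) (sq n))
          (S₂ := (ChainComplex.of P d sq).sc' (n + 2) (n + 1) n)
          (ShortComplex.isoMk (Iso.refl _) (Iso.refl _) (Iso.refl _) ?_ ?_)).1 (exact n)
        · erw [Category.id_comp, Category.comp_id]; exact hd (n + 1)
        · erw [Category.id_comp, Category.comp_id]; exact hd n⟩ }

lemma ofExact_complex_d (n : ℕ) :
    (ofExact P hP d sq ε hε hεepi exact₀ exact).complex.d (n + 1) n = d n :=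
  ChainComplex.of_d P d n

end

variable {R : Type*} [Ring R] [Linear R C] [EnoughProjectives C]

lemma subsingleton_ext_one {X : C} (P : ProjectiveResolution X) (Y : C)
    (h : ∀ φ : P.complex.X 1 ⟶ Y, P.complex.d 2 1 ≫ φ = 0 →
      ∃ χ : P.complex.X 0 ⟶ Y, P.complex.d 1 0 ≫ χ = φ) :
    Subsingleton (((Ext R C 1).obj (op X)).obj Y) := by
  refine ModuleCat.subsingleton_of_isZero (IsZero.of_iso ?_ (P.isoExt 1 Y))
  rw [← HomologicalComplex.exactAt_iff_isZero_homology,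
    HomologicalComplex.exactAt_iff' _ 0 1 2 (by simp) (by simp), ShortComplex.moduleCat_exact_iff]
  intro φ hφ
  obtain ⟨χ, hχ⟩ := h φ hφ
  exact ⟨χ, hχ⟩

end CategoryTheory.ProjectiveResolution

def HomSurjective {D : Type*} [Category D] (V : Set D) {x y : D} (p : x ⟶ y) : Prop :=
  ∀ v ∈ V, ∀ f : v ⟶ y, ∃ g : v ⟶ x, g ≫ p = f

def desuspension {D : Type*} [Category D] [HasShift D ℤ] (U : Set D) : Set D :=
  {t | t⟦(1 : ℤ)⟧ ∈ U}

def IsQuotientBy {D A : Type*} [Category D] [Category A] [HasZeroMorphisms A] (π : D ⥤ A)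
    (U : Set D) : Prop :=
  ∀ ⦃x y : D⦄ (f : x ⟶ y), π.map f = 0 ↔ FactorsThru U f

namespace ClusterTilting

variable {D : Type*} [Category D] [Preadditive D] [HasShift D ℤ] {U : Set D}

lemma hom_shift_eq_zero (hU : ClusterTilting U) {u u' : D} (hu : u ∈ U) (hu' : u' ∈ U)
    (f : u ⟶ u'⟦(1 : ℤ)⟧) : f = 0 :=
  (hU.1.1 u').1 hu' u hu f

lemma mem_of_iso (hU : ClusterTilting U) {x y : D} (e : x ≅ y) (hy : y ∈ U) : x ∈ U :=
  (hU.1.1 x).2 fun u hu f => by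
    simpa using hU.hom_shift_eq_zero hu hy (f ≫ e.hom⟦(1 : ℤ)⟧') =≫ e.inv⟦(1 : ℤ)⟧'

lemma isPrecovering_desuspension (hU : ClusterTilting U) : IsPrecovering (desuspension U) :=
  IsPrecovering.comap_equivalence (shiftEquiv D (1 : ℤ)) (fun _ _ e h => hU.mem_of_iso e h) hU.2.1

variable [∀ n : ℤ, (shiftFunctor D n).Additive]

lemma hom_eq_zero_of_mem_desuspension (hU : ClusterTilting U) {t u : D}
    (ht : t ∈ desuspension U) (hu : u ∈ U) (f : t ⟶ u) : f = 0 :=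
  (Functor.map_eq_zero_iff (shiftFunctor D (1 : ℤ))).1 (hU.hom_shift_eq_zero ht hu _)

lemma mem_of_forall_hom_eq_zero (hU : ClusterTilting U) {x : D}
    (h : ∀ ⦃s : D⦄, s ∈ desuspension U → ∀ f : s ⟶ x, f = 0) : x ∈ U :=
  (hU.1.1 x).2 fun u hu f => by
    have hs : u⟦(-1 : ℤ)⟧ ∈ desuspension U := hU.mem_of_iso (shiftNegShift u (1 : ℤ)) hu
    have h0 := h hs ((shiftFunctor D (1 : ℤ)).preimage ((shiftNegShift u (1 : ℤ)).hom ≫ f))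
    rw [← cancel_epi (shiftNegShift u (1 : ℤ)).hom, comp_zero,
      ← (shiftFunctor D (1 : ℤ)).map_preimage ((shiftNegShift u (1 : ℤ)).hom ≫ f), h0,
      Functor.map_zero]

lemma cone_mem_of_homSurjective [HasZeroObject D] [Pretriangulated D] (hU : ClusterTilting U)
    {t y c : D} (ht : t ∈ desuspension U) {p : t ⟶ y} (hp : HomSurjective (desuspension U) p) {j : y ⟶ c}
    {θ : c ⟶ t⟦(1 : ℤ)⟧} (hT : Triangle.mk p j θ ∈ distTriang D) : c ∈ U :=
  hU.mem_of_forall_hom_eq_zero fun s hs f => by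
    obtain ⟨g, rfl⟩ : ∃ g : s ⟶ y, f = g ≫ j :=
      Triangle.coyoneda_exact₃ _ hT f (hU.hom_eq_zero_of_mem_desuspension hs ht _)
    obtain ⟨l, rfl⟩ := hp s hs g
    simp [show p ≫ j = 0 from comp_distTriang_mor_zero₁₂ _ hT]

end ClusterTilting

namespace IsQuotientBy

variable {D : Type*} [Category D] {U : Set D} {A : Type*} [Category A] [Preadditive A]
  {π : D ⥤ A}

variable [Preadditive D] [HasShift D ℤ] [∀ n : ℤ, (shiftFunctor D n).Additive]

lemma eq_zero_of_map_eq_zero (hπ : IsQuotientBy π U) (hU : ClusterTilting U) {s x : D}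
    (hs : s ∈ desuspension U) {f : s ⟶ x} (hf : π.map f = 0) : f = 0 := by
  obtain ⟨u, hu, g, h, rfl⟩ := (hπ f).1 hf
  rw [hU.hom_eq_zero_of_mem_desuspension hs hu g, zero_comp]

variable [HasZeroObject D] [Pretriangulated D] [π.Full] [π.EssSurj]

lemma epi_map_of_homSurjective (hπ : IsQuotientBy π U) (hU : ClusterTilting U) {t y : D}
    (ht : t ∈ desuspension U) {p : t ⟶ y} (hp : HomSurjective (desuspension U) p) :
    Epi (π.map p) := by
  refine π.epi_map_of_cancel_zero p fun z q hq => ?_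
  obtain ⟨c, j, θ, hT⟩ := distinguished_cocone_triangle p
  obtain ⟨r, rfl⟩ : ∃ r : c ⟶ z, q = j ≫ r :=
    Triangle.yoneda_exact₂ _ hT q (hπ.eq_zero_of_map_eq_zero hU ht hq)
  exact (hπ _).2 ⟨c, hU.cone_mem_of_homSurjective ht hp hT, j, r, rfl⟩

lemma exists_epi_from_desuspension (hπ : IsQuotientBy π U) (hU : ClusterTilting U) (X : A) :
    ∃ s ∈ desuspension U, ∃ ρ : π.obj s ⟶ X, Epi ρ := by
  obtain ⟨t, ht, p, hp⟩ := hU.isPrecovering_desuspension (π.objPreimage X)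
  have := hπ.epi_map_of_homSurjective hU ht hp
  exact ⟨t, ht, π.map p ≫ (π.objObjPreimageIso X).hom, epi_comp _ _⟩

variable [π.Additive]

lemma projective_obj (hπ : IsQuotientBy π U) (hU : ClusterTilting U) {t : D}
    (ht : t ∈ desuspension U) : Projective (π.obj t) := by
  refine π.projective_obj_of_exists_lift fun a b e he g => ?_
  obtain ⟨c, j, θ, hT⟩ := distinguished_cocone_triangle e
  have hj : π.map j = 0 := by
    rw [← cancel_epi (π.map e), ← π.map_comp, comp_zero]
    simp [show e ≫ j = 0 from comp_distTriang_mor_zero₁₂ _ hT]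
  obtain ⟨u, hu, α, β, rfl⟩ := (hπ j).1 hj
  obtain ⟨l, hl⟩ := Triangle.coyoneda_exact₂ _ hT g
    (show g ≫ α ≫ β = 0 by
      rw [← Category.assoc, hU.hom_eq_zero_of_mem_desuspension ht hu (g ≫ α), zero_comp])
  exact ⟨l, hl.symm⟩

end IsQuotientBy

section

variable {D : Type*} [Category D] [Preadditive D] [HasZeroObject D] [HasShift D ℤ]
  [∀ n : ℤ, (shiftFunctor D n).Additive] [Pretriangulated D] {U : Set D}
  {A : Type*} [Category A] {π : D ⥤ A}

variable (U π) in
structure ResolvingTriangle (y : D) where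
  obj : D
  syzygy : D
  ι : syzygy ⟶ obj
  p : obj ⟶ y
  δ : y ⟶ syzygy⟦(1 : ℤ)⟧
  distinguished : Triangle.mk ι p δ ∈ distTriang D
  projective : Projective (π.obj obj)
  epi : Epi (π.map p)
  homSurjective_desuspension : HomSurjective (desuspension U) p
  homSurjective : HomSurjective U p

namespace ResolvingTriangle

variable {y : D} (R : ResolvingTriangle U π y)

lemma ι_comp_p : R.ι ≫ R.p = 0 := comp_distTriang_mor_zero₁₂ _ R.distinguished

lemma p_comp_δ : R.p ≫ R.δ = 0 := comp_distTriang_mor_zero₂₃ _ R.distinguished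

lemma comp_p_comp_eq_zero (R' : ResolvingTriangle U π R.syzygy)
    (R'' : ResolvingTriangle U π R'.syzygy) : (R''.p ≫ R'.ι) ≫ R'.p ≫ R.ι = 0 := by
  simp [reassoc_of% R'.ι_comp_p]

lemma p_comp_ι_comp_p (R' : ResolvingTriangle U π R.syzygy) : (R'.p ≫ R.ι) ≫ R.p = 0 := by
  simp [R.ι_comp_p]

lemma eq_zero_of_comp_ι_eq_zero {s : D} (hs : s ∈ desuspension U) {m : s ⟶ R.syzygy}
    (hm : m ≫ R.ι = 0) : m = 0 := by
  refine (Functor.map_eq_zero_iff (shiftFunctor D (1 : ℤ))).1 ?_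
  obtain ⟨g, hg⟩ : ∃ g : s⟦(1 : ℤ)⟧ ⟶ y, m⟦(1 : ℤ)⟧' = g ≫ R.δ :=
    Triangle.coyoneda_exact₁ _ R.distinguished (m⟦(1 : ℤ)⟧')
      (show m⟦(1 : ℤ)⟧' ≫ R.ι⟦(1 : ℤ)⟧' = 0 by rw [← Functor.map_comp, hm, Functor.map_zero])
  obtain ⟨l, rfl⟩ := R.homSurjective _ hs g
  rw [hg, Category.assoc, R.p_comp_δ, comp_zero]

lemma exists_lift_of_comp_p_eq_zero (R' : ResolvingTriangle U π R.syzygy) {s : D}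
    (hs : s ∈ desuspension U) {m : s ⟶ R.obj} (hm : m ≫ R.p = 0) :
    ∃ l : s ⟶ R'.obj, l ≫ R'.p ≫ R.ι = m := by
  obtain ⟨g, rfl⟩ := Triangle.coyoneda_exact₂ _ R.distinguished m hm
  obtain ⟨l, rfl⟩ := R'.homSurjective_desuspension _ hs g
  exact ⟨l, (Category.assoc _ _ _).symm⟩

end ResolvingTriangle

section Syzygies

variable (R : ∀ y : D, ResolvingTriangle U π y)

def syzygies (v : D) : ℕ → D
  | 0 => v
  | n + 1 => (R (syzygies v n)).syzygy

def syzygyDiff (v : D) (n : ℕ) : (R (syzygies R v (n + 1))).obj ⟶ (R (syzygies R v n)).obj :=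
  (R (syzygies R v (n + 1))).p ≫ (R (syzygies R v n)).ι

lemma syzygyDiff_comp (v : D) (n : ℕ) : syzygyDiff R v (n + 1) ≫ syzygyDiff R v n = 0 :=
  (R _).comp_p_comp_eq_zero (R _) (R _)

lemma syzygyDiff_comp_p (v : D) : syzygyDiff R v 0 ≫ (R v).p = 0 :=
  (R v).p_comp_ι_comp_p (R _)

end Syzygies

variable [Abelian A] [π.Full] [π.EssSurj] [π.Additive]

lemma IsQuotientBy.exact_map (hπ : IsQuotientBy π U) (hU : ClusterTilting U) {x y z : D}
    (f : x ⟶ y) (g : y ⟶ z) (hfg : f ≫ g = 0)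
    (h : ∀ ⦃s : D⦄, s ∈ desuspension U → ∀ m : s ⟶ y, m ≫ g = 0 → ∃ l : s ⟶ x, l ≫ f = m) :
    (ShortComplex.mk (π.map f) (π.map g) (by rw [← π.map_comp, hfg, π.map_zero])).Exact := by
  rw [ShortComplex.exact_iff_exact_up_to_refinements]
  intro X₀ x₂ hx₂
  obtain ⟨s, hs, ρ, hρ⟩ := hπ.exists_epi_from_desuspension hU X₀
  obtain ⟨l, hl⟩ := h hs (π.preimage (ρ ≫ x₂)) (hπ.eq_zero_of_map_eq_zero hU hs (by
    simp only [π.map_comp, π.map_preimage, Category.assoc]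
    simp [show x₂ ≫ π.map g = 0 from hx₂]))
  exact ⟨π.obj s, ρ, hρ, π.map l, by simp [← π.map_comp, hl]⟩

lemma ResolvingTriangle.nonempty (hπ : IsQuotientBy π U) (hU : ClusterTilting U) (y : D) :
    Nonempty (ResolvingTriangle U π y) := by
  obtain ⟨t, ht, p, hp⟩ := hU.isPrecovering_desuspension y
  obtain ⟨u, hu, q, hq⟩ := hU.2.1 y
  obtain ⟨_, ι, δ, hT⟩ := distinguished_cocone_triangle₁ (biprod.desc p q)
  have e : π.obj (t ⊞ u) ≅ π.obj t :=
    { hom := π.map biprod.fst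
      inv := π.map biprod.inl
      hom_inv_id := by
        rw [← π.map_comp, eq_sub_of_add_eq biprod.total, π.map_sub, π.map_id,
          (hπ _).2 ⟨u, hu, biprod.snd, biprod.inr, rfl⟩, sub_zero]
      inv_hom_id := by rw [← π.map_comp, biprod.inl_fst, π.map_id] }
  have hepi := hπ.epi_map_of_homSurjective hU ht hp
  refine ⟨⟨t ⊞ u, _, ι, biprod.desc p q, δ, hT, (hπ.projective_obj hU ht).of_iso e.symm,
    ?_, fun s hs f => ?_, fun v hv f => ?_⟩⟩
  · rw [← biprod.inl_desc p q, π.map_comp] at hepi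
    exact epi_of_epi (π.map biprod.inl) _
  · obtain ⟨g, hg⟩ := hp s hs f
    exact ⟨g ≫ biprod.inl, by simp [hg]⟩
  · obtain ⟨g, hg⟩ := hq v hv f
    exact ⟨g ≫ biprod.inr, by simp [hg]⟩

lemma ResolvingTriangle.exact {y : D} (R : ResolvingTriangle U π y) (hπ : IsQuotientBy π U)
    (hU : ClusterTilting U) :
    (ShortComplex.mk (π.map R.ι) (π.map R.p)
      (by rw [← π.map_comp, R.ι_comp_p, π.map_zero])).Exact :=
  hπ.exact_map hU R.ι R.p R.ι_comp_p fun _ _ m hm => by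
    obtain ⟨l, hl⟩ := Triangle.coyoneda_exact₂ _ R.distinguished m hm
    exact ⟨l, hl.symm⟩

variable (R : ∀ y : D, ResolvingTriangle U π y)

def syzygyResolution (hπ : IsQuotientBy π U) (hU : ClusterTilting U) (v : D) :
    ProjectiveResolution (π.obj v) :=
  ProjectiveResolution.ofExact (fun n => π.obj (R (syzygies R v n)).obj)
    (fun n => (R (syzygies R v n)).projective) (fun n => π.map (syzygyDiff R v n))
    (fun n => by rw [← π.map_comp, syzygyDiff_comp, π.map_zero]) (π.map (R v).p)
    ((π.map_comp _ _).symm.trans ((congr_arg π.map (syzygyDiff_comp_p R v)).trans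
      (π.map_zero _ _)))
    (R v).epi
    (hπ.exact_map hU _ _ (syzygyDiff_comp_p R v) fun _ hs _ hm =>
      (R v).exists_lift_of_comp_p_eq_zero (R (R v).syzygy) hs hm)
    (fun n => hπ.exact_map hU _ _ (syzygyDiff_comp R v n) fun _ hs _ hm =>
      (R _).exists_lift_of_comp_p_eq_zero (R (syzygies R v (n + 2))) hs
        ((R _).eq_zero_of_comp_ι_eq_zero hs ((Category.assoc _ _ _).trans hm)))

lemma syzygyResolution_complex_d (hπ : IsQuotientBy π U) (hU : ClusterTilting U) (v : D)
    (n : ℕ) : (syzygyResolution R hπ hU v).complex.d (n + 1) n = π.map (syzygyDiff R v n) :=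
  ProjectiveResolution.ofExact_complex_d _ _ _ _ _ _ _ _ _ n

end

theorem subsingleton_ext_one_of_hom_shift_eq_zero {D : Type*} [Category D] [Preadditive D]
    [HasZeroObject D] [HasShift D ℤ] [∀ n : ℤ, (shiftFunctor D n).Additive] [Pretriangulated D]
    {U : Set D} {k : Type*} [Ring k] {A : Type*} [Category A] [Abelian A] [Linear k A]
    [EnoughProjectives A] {π : D ⥤ A} [π.Full] [π.EssSurj] [π.Additive]
    (hπ : IsQuotientBy π U) (hU : ClusterTilting U) {v v' : D}
    (hvv' : ∀ f : v ⟶ v'⟦(1 : ℤ)⟧, f = 0) :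
    Subsingleton (((Ext k A 1).obj (op (π.obj v))).obj (π.obj v')) := by
  let R y := (ResolvingTriangle.nonempty hπ hU y).some
  let R₀ := R v
  let R₁ := R R₀.syzygy
  let R₂ := R R₁.syzygy
  refine (syzygyResolution R hπ hU v).subsingleton_ext_one (π.obj v')
    fun (φ : π.obj R₁.obj ⟶ π.obj v') hφ => ?_
  have h₂₁ : (syzygyResolution R hπ hU v).complex.d 2 1 = π.map (R₂.p ≫ R₁.ι) :=
    syzygyResolution_complex_d R hπ hU v 1
  have h₁₀ : (syzygyResolution R hπ hU v).complex.d 1 0 = π.map (R₁.p ≫ R₀.ι) :=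
    syzygyResolution_complex_d R hπ hU v 0
  rw [h₂₁, π.map_comp] at hφ
  have := R₂.epi
  have h₁ : π.map R₁.ι ≫ φ = 0 :=
    (cancel_epi (π.map R₂.p)).1 (((Category.assoc _ _ _).symm.trans hφ).trans comp_zero.symm)
  have := R₁.epi
  obtain ⟨ψ, hψ⟩ : ∃ ψ : π.obj R₀.syzygy ⟶ π.obj v', π.map R₁.p ≫ ψ = φ :=
    (R₁.exact hπ hU).desc' φ h₁
  -- the obstruction to extending `ψ` along `R₀.ι` lies in `Hom(v, Σv') = 0`
  obtain ⟨χ, hχ⟩ : ∃ χ : R₀.obj ⟶ v', π.preimage ψ = R₀.ι ≫ χ :=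
    Triangle.yoneda_exact₁ _ R₀.distinguished (π.preimage ψ) (hvv' _)
  have hφχ : π.map (R₁.p ≫ R₀.ι) ≫ π.map χ = φ := by
    rw [π.map_comp, Category.assoc, ← π.map_comp, ← hχ, π.map_preimage, hψ]
  exact ⟨π.map χ, h₁₀ ▸ hφχ⟩

/-- Let `D` be a triangulated category with cluster tilting subcategory `U` such that the
abelian quotient `D/U` has finite global dimension.  If `V` is a cluster tilting
subcategory of `D`, then `Ext¹_{D/U}(v̄, v̄′) = 0` for all `v, v′ ∈ V`: the projected
subcategory `V̄` is rigid. -/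
theorem stmt10 {k : Type*} [Field k]
    {D : Type*} [Category D] [Preadditive D] [Linear k D] [HasZeroObject D]
    [HasShift D ℤ] [∀ (n : ℤ), (shiftFunctor D n).Additive] [Pretriangulated D]
    [∀ x y : D, FiniteDimensional k (x ⟶ y)]
    (S : D ⥤ D) [S.IsEquivalence]
    (hSerre : ∀ a b : D, Nonempty ((a ⟶ b) ≃ₗ[k] Module.Dual k (b ⟶ S.obj a)))
    (U : Set D) (hU : ClusterTilting U)
    {A : Type*} [Category A] [Abelian A] [Linear k A] [EnoughProjectives A]
    (π : D ⥤ A) [π.Full] [π.EssSurj] [π.Additive]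
    (hπ : ∀ ⦃x y : D⦄ (f : x ⟶ y), π.map f = 0 ↔ FactorsThru U f)
    (hgl : FinGlobalDim k A)
    (V : Set D) (hV : ClusterTilting V) :
    ∀ v ∈ V, ∀ v' ∈ V,
      Subsingleton (((Ext k A 1).obj (op (π.obj v))).obj (π.obj v')) :=
  fun _ hv _ hv' => subsingleton_ext_one_of_hom_shift_eq_zero hπ hU
    (hV.hom_shift_eq_zero hv hv')
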